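/- Consider two investors: investor 1 with initial portfolio (x₀, y₀), y₀ > 0, and investor 2 with all wealth x₀ + y₀ in the riskless asset. For every admissible strategy θ ≥ −y₀ of investor 1, the strategy θ' = θ + y₀ of investor 2 produces a terminal wealth at least as large as that of investor 1 in every state; consequently, if the optimal prospect of investor 1 is finite, it is bounded above by the optimal prospect of investor 2 (both measured relative to the same reference point). -/
import Mathlib

theorem stmt_18 {Ω : Type*} (R : Ω → ℝ) (lam r x₀ y₀ : ℝ)
    (hlam0 : 0 < lam) (hlam1 : lam < 1) (hr : 0 ≤ r) (hy : 0 < y₀)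
    (W₁ W₂ : ℝ → Ω → ℝ)
    (hW₁ : ∀ θ ω, W₁ θ ω = (1 + r) * (x₀ - θ) + (1 + R ω) * (y₀ + θ)
      - lam * ((1 + R ω) * max (y₀ + θ) 0 + (1 + r) * max (-θ) 0))
    (hW₂ : ∀ θ ω, W₂ θ ω = (1 + r) * (x₀ + y₀ - θ) + (1 + R ω) * θ
      - lam * ((1 + R ω) * max θ 0 + (1 + r) * max (-θ) 0))
    (hR : ∀ ω, -1 < R ω)
    (V : (Ω → ℝ) → ℝ)
    (hV : ∀ f g : Ω → ℝ, (∀ ω, f ω ≤ g ω) → V f ≤ V g) :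
    (∀ θ, -y₀ ≤ θ → ∀ ω, W₁ θ ω ≤ W₂ (θ + y₀) ω) ∧
    (∀ θ, -y₀ ≤ θ → ∃ θ', V (W₁ θ) ≤ V (W₂ θ')) := by
  have key : ∀ θ, -y₀ ≤ θ → ∀ ω, W₁ θ ω ≤ W₂ (θ + y₀) ω := by
    intro θ hθ ω
    rw [hW₁, hW₂]
    have h1 : max (-(y₀ + θ)) 0 ≤ max (-θ) 0 :=
      max_le_max (by linarith) le_rfl
    have h2 : 0 ≤ lam * (1 + r) := by positivity
    rw [show θ + y₀ = y₀ + θ from add_comm _ _]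
    nlinarith [mul_le_mul_of_nonneg_left h1 h2]
  refine ⟨key, fun θ hθ => ⟨θ + y₀, hV _ _ (key θ hθ)⟩⟩
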